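/- The number of increasing plane rooted trees of size n (n ≥ 1) equals (2n-2)! / (2^(n-1) · (n-1)!), i.e. the product of odd numbers 1·3·5···(2n-3). -/

import Mathlib

inductive PlaneTree : Type where
  | node : List PlaneTree → PlaneTree

namespace PlaneTree

mutual
  /-- number of nodes of a plane rooted tree -/
  def size : PlaneTree → ℕ
    | .node ts => 1 + sizeAux ts
  def sizeAux : List PlaneTree → ℕ
    | [] => 0
    | t :: ts => size t + sizeAux ts
end

mutual
  /-- product of the sizes of all subtrees (hook product) -/
  def hookProd : PlaneTree → ℕ
    | .node ts => size (.node ts) * hookProdAux ts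
  def hookProdAux : List PlaneTree → ℕ
    | [] => 1
    | t :: ts => hookProd t * hookProdAux ts
end

end PlaneTree

/-- plane rooted trees with labelled nodes -/
inductive LTree : Type where
  | node : ℕ → List LTree → LTree

namespace LTree

def rootLabel : LTree → ℕ
  | .node a _ => a

mutual
  /-- labels strictly increase along every root-to-leaf path -/
  def inc : LTree → Prop
    | .node a ts => incAux a ts
  def incAux : ℕ → List LTree → Prop
    | _, [] => True
    | a, t :: ts => (a < rootLabel t ∧ inc t) ∧ incAux a ts
end

mutual
  def labels : LTree → List ℕ
    | .node a ts => a :: labelsAux ts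
  def labelsAux : List LTree → List ℕ
    | [] => []
    | t :: ts => labels t ++ labelsAux ts
end

mutual
  /-- the underlying (unlabelled) plane tree -/
  def shape : LTree → PlaneTree
    | .node _ ts => .node (shapeAux ts)
  def shapeAux : List LTree → List PlaneTree
    | [] => []
    | t :: ts => shape t :: shapeAux ts
end

end LTree

/-- Increasing plane rooted trees of size `n`: increasing labelled plane trees whose
multiset of labels is exactly `{1, …, n}`. -/
def IncTreeSet (n : ℕ) : Set LTree :=
  {t | t.inc ∧ (t.labels).Perm (List.range' 1 n)}

/-- the number of increasing plane rooted trees of size `n` -/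
noncomputable def numInc (n : ℕ) : ℕ := (IncTreeSet n).ncard

/-- the number of increasing labellings of a given plane rooted tree `T` -/
noncomputable def numIncLab (T : PlaneTree) : ℕ :=
  {t : LTree | t.shape = T ∧ t.inc ∧ (t.labels).Perm (List.range' 1 T.size)}.ncard

/-- the number of plane rooted trees of size `n` -/
noncomputable def treeCount (n : ℕ) : ℕ := {T : PlaneTree | T.size = n}.ncard

/-! In an increasing tree on `{1, …, n + 1}` the label `n + 1` sits on a leaf; removing it leaves
an increasing tree on `{1, …, n}`. Conversely a new leaf can be attached to a forest with `k`
nodes in `2k + 1` slots (before each tree, inside each tree's forest of children, and at the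
end), so to a tree with `n` nodes in `2n - 1` ways. Hence the count is multiplied by `2n - 1`
at each step, giving `1 · 3 ⋯ (2n - 3)`. -/

namespace LTree

mutual
  def slots : LTree → ℕ
    | .node _ ts => slotsAux ts
  def slotsAux : List LTree → ℕ
    | [] => 1
    | t :: ts => 1 + slots t + slotsAux ts
end

mutual
  def insertLeaf (m i : ℕ) : LTree → LTree
    | .node a ts => .node a (insertLeafAux m i ts)
  def insertLeafAux (m i : ℕ) : List LTree → List LTree
    | [] => [.node m []]
    | t :: ts =>
      if i = 0 then .node m [] :: t :: ts
      else if i < 1 + slots t then insertLeaf m (i - 1) t :: ts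
      else t :: insertLeafAux m (i - 1 - slots t) ts
end

mutual
  def erase (m : ℕ) : LTree → LTree
    | .node a ts => .node a (eraseAux m ts)
  def eraseAux (m : ℕ) : List LTree → List LTree
    | [] => []
    | t :: ts =>
      if rootLabel t = m then ts
      else if m ∈ labels t then erase m t :: ts
      else t :: eraseAux m ts
end

mutual
  /-- The slot at which `insertLeaf m` has to attach a leaf to `erase m t` to give back `t`. -/
  def slotOf (m : ℕ) : LTree → ℕ
    | .node _ ts => slotOfAux m ts
  def slotOfAux (m : ℕ) : List LTree → ℕ
    | [] => 0
    | t :: ts =>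
      if rootLabel t = m then 0
      else if m ∈ labels t then 1 + slotOf m t
      else 1 + slots t + slotOfAux m ts
end

theorem one_le_slotsAux (ts : List LTree) : 1 ≤ slotsAux ts := by
  cases ts <;> simp only [slotsAux] <;> omega

theorem rootLabel_mem_labels (t : LTree) : rootLabel t ∈ labels t := by
  cases t
  simp [rootLabel, labels]

theorem labels_ne_nil (t : LTree) : labels t ≠ [] :=
  List.ne_nil_of_mem (rootLabel_mem_labels t)

theorem rootLabel_insertLeaf (m i : ℕ) (t : LTree) :
    rootLabel (insertLeaf m i t) = rootLabel t := by
  cases t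
  rfl

theorem rootLabel_erase (m : ℕ) (t : LTree) : rootLabel (erase m t) = rootLabel t := by
  cases t
  rfl

mutual
  theorem slots_add_one : ∀ t : LTree, slots t + 1 = 2 * (labels t).length
    | .node a ts => by
      simp only [slots, labels, List.length_cons, slotsAux_eq ts]
      omega
  theorem slotsAux_eq : ∀ ts : List LTree, slotsAux ts = 2 * (labelsAux ts).length + 1
    | [] => rfl
    | t :: ts => by
      have := slots_add_one t
      simp only [slotsAux, labelsAux, List.length_append, slotsAux_eq ts]
      omega
end

mutual
  theorem rootLabel_le_of_mem_labels : ∀ {t : LTree} {b : ℕ}, inc t → b ∈ labels t →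
      rootLabel t ≤ b
    | .node a ts, b, ht, hb => by
      simp only [labels, List.mem_cons] at hb
      rcases hb with rfl | hb
      · exact le_rfl
      · exact (lt_of_incAux_of_mem_labelsAux ht hb).le
  theorem lt_of_incAux_of_mem_labelsAux : ∀ {a b : ℕ} {ts : List LTree}, incAux a ts →
      b ∈ labelsAux ts → a < b
    | _, _, [], _, hb => by simp [labelsAux] at hb
    | _, _, t :: ts, ⟨⟨hat, ht⟩, hts⟩, hb => by
      simp only [labelsAux, List.mem_append] at hb
      rcases hb with hb | hb
      · exact hat.trans_le (rootLabel_le_of_mem_labels ht hb)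
      · exact lt_of_incAux_of_mem_labelsAux hts hb
end

mutual
  theorem labels_insertLeaf_perm : ∀ (m i : ℕ) (t : LTree),
      (labels (insertLeaf m i t)).Perm (m :: labels t)
    | m, i, .node a ts =>
      ((labelsAux_insertLeafAux_perm m i ts).cons a).trans (List.Perm.swap m a _)
  theorem labelsAux_insertLeafAux_perm : ∀ (m i : ℕ) (ts : List LTree),
      (labelsAux (insertLeafAux m i ts)).Perm (m :: labelsAux ts)
    | m, i, [] => by simp [insertLeafAux, labelsAux, labels]
    | m, i, t :: ts => by
      by_cases h0 : i = 0
      · simp [insertLeafAux, h0, labelsAux, labels]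
      by_cases hlt : i < 1 + slots t
      · simp only [insertLeafAux, h0, hlt, if_false, if_true, labelsAux]
        exact (labels_insertLeaf_perm m (i - 1) t).append_right _
      · simp only [insertLeafAux, h0, hlt, if_false, labelsAux]
        exact ((labelsAux_insertLeafAux_perm m _ ts).append_left _).trans List.perm_middle
end

mutual
  theorem inc_insertLeaf : ∀ {m : ℕ} (i : ℕ) {t : LTree}, inc t → (∀ b ∈ labels t, b < m) →
      inc (insertLeaf m i t)
    | _, i, .node a _, ht, hb =>
      incAux_insertLeafAux i (hb a List.mem_cons_self) ht
        (fun b hbts => hb b (List.mem_cons_of_mem a hbts))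
  theorem incAux_insertLeafAux : ∀ {m : ℕ} (i : ℕ) {a : ℕ} {ts : List LTree}, a < m →
      incAux a ts → (∀ b ∈ labelsAux ts, b < m) → incAux a (insertLeafAux m i ts)
    | _, _, _, [], ham, _, _ => by simp [insertLeafAux, incAux, rootLabel, inc, ham]
    | _, i, _, t :: ts, ham, ⟨⟨hat, ht⟩, hts⟩, hb => by
      have hbt : ∀ b ∈ labels t, b < _ := fun b h => hb b (List.mem_append_left _ h)
      have hbts : ∀ b ∈ labelsAux ts, b < _ := fun b h => hb b (List.mem_append_right _ h)
      by_cases h0 : i = 0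
      · simp only [insertLeafAux, h0, if_true]
        exact ⟨⟨ham, trivial⟩, ⟨hat, ht⟩, hts⟩
      by_cases hlt : i < 1 + slots t
      · simp only [insertLeafAux, h0, hlt, if_false, if_true]
        exact ⟨⟨(rootLabel_insertLeaf _ _ t).symm ▸ hat, inc_insertLeaf _ ht hbt⟩, hts⟩
      · simp only [insertLeafAux, h0, hlt, if_false]
        exact ⟨⟨hat, ht⟩, incAux_insertLeafAux _ ham hts hbts⟩
end

mutual
  theorem inc_erase : ∀ (m : ℕ) {t : LTree}, inc t → inc (erase m t)
    | m, .node _ _, ht => incAux_eraseAux m ht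
  theorem incAux_eraseAux : ∀ (m : ℕ) {a : ℕ} {ts : List LTree}, incAux a ts →
      incAux a (eraseAux m ts)
    | _, _, [], h => h
    | m, _, t :: ts, ⟨⟨hat, ht⟩, hts⟩ => by
      by_cases hr : rootLabel t = m
      · simpa [eraseAux, hr] using hts
      by_cases hm : m ∈ labels t
      · simp only [eraseAux, hr, hm, if_false, if_true]
        exact ⟨⟨(rootLabel_erase m t).symm ▸ hat, inc_erase m ht⟩, hts⟩
      · simp only [eraseAux, hr, hm, if_false]
        exact ⟨⟨hat, ht⟩, incAux_eraseAux m hts⟩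
end

mutual
  theorem erase_insertLeaf : ∀ {m : ℕ} (i : ℕ) {t : LTree}, m ∉ labels t →
      erase m (insertLeaf m i t) = t
    | _, i, .node a ts, h => by
      simp only [labels, List.mem_cons, not_or] at h
      simp only [insertLeaf, erase, eraseAux_insertLeafAux i h.2]
  theorem eraseAux_insertLeafAux : ∀ {m : ℕ} (i : ℕ) {ts : List LTree}, m ∉ labelsAux ts →
      eraseAux m (insertLeafAux m i ts) = ts
    | _, _, [], _ => by simp [insertLeafAux, eraseAux, rootLabel]
    | m, i, t :: ts, h => by
      simp only [labelsAux, List.mem_append, not_or] at h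
      have hr : rootLabel t ≠ m := fun he => h.1 (he ▸ rootLabel_mem_labels t)
      by_cases h0 : i = 0
      · simp [insertLeafAux, h0, eraseAux, rootLabel]
      by_cases hlt : i < 1 + slots t
      · have hmem : m ∈ labels (insertLeaf m (i - 1) t) :=
          (labels_insertLeaf_perm m (i - 1) t).mem_iff.mpr List.mem_cons_self
        simp [insertLeafAux, h0, hlt, eraseAux, rootLabel_insertLeaf, hr, hmem,
          erase_insertLeaf (i - 1) h.1]
      · simp [insertLeafAux, h0, hlt, eraseAux, hr, h.1, eraseAux_insertLeafAux _ h.2]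
end

mutual
  theorem slotOf_insertLeaf : ∀ {m i : ℕ} {t : LTree}, m ∉ labels t → i < slots t →
      slotOf m (insertLeaf m i t) = i
    | _, _, .node a _, h, hi => by
      simp only [labels, List.mem_cons, not_or] at h
      exact slotOfAux_insertLeafAux h.2 hi
  theorem slotOfAux_insertLeafAux : ∀ {m i : ℕ} {ts : List LTree}, m ∉ labelsAux ts →
      i < slotsAux ts → slotOfAux m (insertLeafAux m i ts) = i
    | _, i, [], _, hi => by
      obtain rfl : i = 0 := by simpa [slotsAux] using hi
      simp [insertLeafAux, slotOfAux, rootLabel]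
    | m, i, t :: ts, h, hi => by
      simp only [labelsAux, List.mem_append, not_or] at h
      simp only [slotsAux] at hi
      have hr : rootLabel t ≠ m := fun he => h.1 (he ▸ rootLabel_mem_labels t)
      by_cases h0 : i = 0
      · simp [insertLeafAux, h0, slotOfAux, rootLabel]
      by_cases hlt : i < 1 + slots t
      · have hmem : m ∈ labels (insertLeaf m (i - 1) t) :=
          (labels_insertLeaf_perm m (i - 1) t).mem_iff.mpr List.mem_cons_self
        have := slotOf_insertLeaf (i := i - 1) h.1 (by omega)
        simp only [insertLeafAux, h0, hlt, if_false, if_true, slotOfAux,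
          rootLabel_insertLeaf, hr, hmem]
        omega
      · have := slotOfAux_insertLeafAux (i := i - 1 - slots t) h.2 (by omega)
        simp only [insertLeafAux, h0, hlt, if_false, slotOfAux, hr, h.1]
        omega
end

mutual
  theorem slotOf_lt_slots_erase : ∀ {m : ℕ} {t : LTree}, m ∈ labels t → rootLabel t ≠ m →
      slotOf m t < slots (erase m t)
    | _, .node a ts, h, hr => by
      simp only [labels, List.mem_cons, rootLabel] at h hr
      exact slotOfAux_lt_slotsAux_eraseAux (h.resolve_left (Ne.symm hr))
  theorem slotOfAux_lt_slotsAux_eraseAux : ∀ {m : ℕ} {ts : List LTree}, m ∈ labelsAux ts →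
      slotOfAux m ts < slotsAux (eraseAux m ts)
    | _, [], h => by simp [labelsAux] at h
    | m, t :: ts, h => by
      have := one_le_slotsAux ts
      by_cases hr : rootLabel t = m
      · simp only [slotOfAux, eraseAux, hr, if_true]
        omega
      by_cases hm : m ∈ labels t
      · have := slotOf_lt_slots_erase hm hr
        simp only [slotOfAux, eraseAux, hr, hm, if_false, if_true, slotsAux]
        omega
      · simp only [labelsAux, List.mem_append, hm, false_or] at h
        have := slotOfAux_lt_slotsAux_eraseAux h
        simp only [slotOfAux, eraseAux, hr, hm, if_false, slotsAux]
        omega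
end

mutual
  theorem insertLeaf_slotOf_erase : ∀ {m : ℕ} {t : LTree}, inc t → (∀ b ∈ labels t, b ≤ m) →
      m ∈ labels t → rootLabel t ≠ m → insertLeaf m (slotOf m t) (erase m t) = t
    | _, .node a ts, ht, hb, hm, hr => by
      simp only [labels, List.mem_cons, rootLabel] at hm hr
      simp only [slotOf, erase, insertLeaf,
        insertLeafAux_slotOfAux_eraseAux ht (fun b h => hb b (List.mem_cons_of_mem a h))
          (hm.resolve_left (Ne.symm hr))]
  theorem insertLeafAux_slotOfAux_eraseAux : ∀ {m a : ℕ} {ts : List LTree}, incAux a ts →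
      (∀ b ∈ labelsAux ts, b ≤ m) → m ∈ labelsAux ts →
      insertLeafAux m (slotOfAux m ts) (eraseAux m ts) = ts
    | _, _, [], _, _, hm => by simp [labelsAux] at hm
    | m, _, t :: ts, ⟨⟨_, ht⟩, hts⟩, hb, hm => by
      have hbt : ∀ b ∈ labels t, b ≤ m := fun b h => hb b (List.mem_append_left _ h)
      have hbts : ∀ b ∈ labelsAux ts, b ≤ m := fun b h => hb b (List.mem_append_right _ h)
      by_cases hr : rootLabel t = m
      · -- the node labelled `m` is a leaf, since its children carry larger labels
        obtain ⟨c, cs⟩ := t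
        obtain rfl : c = m := hr
        obtain rfl : cs = [] := by
          cases cs with
          | nil => rfl
          | cons d ds =>
            have hd : rootLabel d ∈ labelsAux (d :: ds) :=
              List.mem_append_left _ (rootLabel_mem_labels d)
            have := hbt _ (List.mem_cons_of_mem c hd)
            have := lt_of_incAux_of_mem_labelsAux (ht : incAux c (d :: ds)) hd
            omega
        cases ts <;> simp [slotOfAux, eraseAux, rootLabel, insertLeafAux]
      by_cases hmt : m ∈ labels t
      · have hlt := slotOf_lt_slots_erase hmt hr
        simp only [slotOfAux, eraseAux, hr, hmt, if_false, if_true, insertLeafAux,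
          Nat.add_sub_cancel_left, insertLeaf_slotOf_erase ht hbt hmt hr]
        rw [if_neg (by omega), if_pos (by omega)]
      · have hsl := one_le_slotsAux (eraseAux m ts)
        simp only [labelsAux, List.mem_append, hmt, false_or] at hm
        simp only [slotOfAux, eraseAux, hr, hmt, if_false, insertLeafAux]
        rw [if_neg (by omega), if_neg (by omega),
          show 1 + slots t + slotOfAux m ts - 1 - slots t = slotOfAux m ts by omega,
          insertLeafAux_slotOfAux_eraseAux hts hbts hm]
end

end LTree

open LTree

theorem List.range'_one_succ_perm (n : ℕ) :
    (List.range' 1 (n + 1)).Perm ((n + 1) :: List.range' 1 n) := by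
  rw [List.range'_1_concat, Nat.add_comm 1 n]
  exact List.perm_append_singleton _ _

section IncTreeSet

variable {n : ℕ} {t : LTree}

theorem mem_labels_iff_of_mem_incTreeSet (ht : t ∈ IncTreeSet n) {b : ℕ} :
    b ∈ labels t ↔ 1 ≤ b ∧ b ≤ n := by
  rw [ht.2.mem_iff, List.mem_range'_1]
  omega

theorem slots_add_one_of_mem_incTreeSet (ht : t ∈ IncTreeSet n) : slots t + 1 = 2 * n := by
  rw [slots_add_one, ht.2.length_eq, List.length_range']

theorem insertLeaf_mem_incTreeSet (ht : t ∈ IncTreeSet n) (i : ℕ) :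
    insertLeaf (n + 1) i t ∈ IncTreeSet (n + 1) := by
  refine ⟨inc_insertLeaf i ht.1 fun b hb => ?_, ?_⟩
  · have := (mem_labels_iff_of_mem_incTreeSet ht).1 hb
    omega
  · exact (labels_insertLeaf_perm _ i t).trans
      ((ht.2.cons _).trans (List.range'_one_succ_perm n).symm)

theorem rootLabel_ne_of_mem_incTreeSet (ht : t ∈ IncTreeSet (n + 2)) :
    rootLabel t ≠ n + 2 := by
  have : rootLabel t ≤ 1 :=
    rootLabel_le_of_mem_labels ht.1 ((mem_labels_iff_of_mem_incTreeSet ht).2 (by omega))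
  omega

theorem insertLeaf_slotOf_erase_of_mem_incTreeSet (ht : t ∈ IncTreeSet (n + 2)) :
    insertLeaf (n + 2) (slotOf (n + 2) t) (erase (n + 2) t) = t :=
  insertLeaf_slotOf_erase ht.1 (fun _ hb => ((mem_labels_iff_of_mem_incTreeSet ht).1 hb).2)
    ((mem_labels_iff_of_mem_incTreeSet ht).2 (by omega)) (rootLabel_ne_of_mem_incTreeSet ht)

theorem erase_mem_incTreeSet (ht : t ∈ IncTreeSet (n + 2)) :
    erase (n + 2) t ∈ IncTreeSet (n + 1) := by
  refine ⟨inc_erase _ ht.1, List.Perm.cons_inv (a := n + 2) ?_⟩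
  have h := labels_insertLeaf_perm (n + 2) (slotOf (n + 2) t) (erase (n + 2) t)
  rw [insertLeaf_slotOf_erase_of_mem_incTreeSet ht] at h
  exact h.symm.trans (ht.2.trans (List.range'_one_succ_perm _))

theorem slotOf_lt_of_mem_incTreeSet (ht : t ∈ IncTreeSet (n + 2)) :
    slotOf (n + 2) t < 2 * n + 1 := by
  have := slotOf_lt_slots_erase ((mem_labels_iff_of_mem_incTreeSet ht).2 (by omega))
    (rootLabel_ne_of_mem_incTreeSet ht)
  have := slots_add_one_of_mem_incTreeSet (erase_mem_incTreeSet ht)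
  omega

end IncTreeSet

def incTreeSetSuccEquiv (n : ℕ) :
    IncTreeSet (n + 2) ≃ IncTreeSet (n + 1) × Fin (2 * n + 1) where
  toFun t := (⟨erase (n + 2) t, erase_mem_incTreeSet t.2⟩,
    ⟨slotOf (n + 2) t, slotOf_lt_of_mem_incTreeSet t.2⟩)
  invFun p := ⟨insertLeaf (n + 2) p.2 p.1, insertLeaf_mem_incTreeSet p.1.2 p.2⟩
  left_inv t := Subtype.ext (insertLeaf_slotOf_erase_of_mem_incTreeSet t.2)
  right_inv := fun ⟨⟨s, hs⟩, i⟩ => by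
    have hm : n + 2 ∉ labels s := fun h => by
      have := (mem_labels_iff_of_mem_incTreeSet hs).1 h
      omega
    have hi : (i : ℕ) < slots s := by
      have := slots_add_one_of_mem_incTreeSet hs
      omega
    ext
    · exact erase_insertLeaf _ hm
    · exact slotOf_insertLeaf hm hi

theorem numInc_add_two (n : ℕ) : numInc (n + 2) = (2 * n + 1) * numInc (n + 1) := by
  rw [numInc, numInc, ← Nat.card_coe_set_eq, ← Nat.card_coe_set_eq,
    Nat.card_congr (incTreeSetSuccEquiv n), Nat.card_prod, Nat.card_eq_fintype_card (α := Fin _),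
    Fintype.card_fin, mul_comm]

theorem incTreeSet_one : IncTreeSet 1 = {.node 1 []} := by
  ext ⟨a, ts⟩
  simp only [IncTreeSet, Set.mem_ofPred_eq, Set.mem_singleton_iff, LTree.node.injEq]
  constructor
  · rintro ⟨-, hperm⟩
    obtain ⟨rfl, hts⟩ : a = 1 ∧ labelsAux ts = [] := by simpa [labels] using hperm
    cases ts with
    | nil => exact ⟨rfl, rfl⟩
    | cons u us => simp [labelsAux, labels_ne_nil] at hts
  · rintro ⟨rfl, rfl⟩
    exact ⟨trivial, by simp [labels, labelsAux]⟩

theorem numInc_one : numInc 1 = 1 := by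
  rw [numInc, incTreeSet_one, Set.ncard_singleton]

theorem numInc_succ_mul (k : ℕ) : numInc (k + 1) * (2 ^ k * k.factorial) = (2 * k).factorial := by
  induction k with
  | zero => simp [numInc_one]
  | succ k ih =>
    rw [numInc_add_two, Nat.factorial_succ, pow_succ, show 2 * (k + 1) = 2 * k + 1 + 1 by ring,
      Nat.factorial_succ (2 * k + 1), Nat.factorial_succ (2 * k), ← ih]
    ring

/-- The number of increasing plane rooted trees of size `n ≥ 1` equals
`(2n-2)! / (2^(n-1) · (n-1)!)`. -/
theorem numInc_eq (n : ℕ) (hn : 1 ≤ n) :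
    numInc n = Nat.factorial (2 * n - 2) / (2 ^ (n - 1) * Nat.factorial (n - 1)) := by
  obtain ⟨k, rfl⟩ : ∃ k, n = k + 1 := ⟨n - 1, by omega⟩
  rw [show 2 * (k + 1) - 2 = 2 * k by omega, Nat.add_sub_cancel, ← numInc_succ_mul]
  exact (Nat.mul_div_cancel _ (by positivity)).symm
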